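/- Let q : V → Z/2Z be a quadratic refinement of a nondegenerate symplectic bilinear form on a finite-dimensional Z/2Z-vector space V with symplectic basis (a_1, b_1, ..., a_g, b_g). Then the Arf invariant Arf(q) = Σ_{i=1}^g q(a_i)q(b_i) is independent of the choice of symplectic basis. -/

import Mathlib

/-- `q` is a quadratic refinement of the bilinear form `B` over `ZMod 2`. -/
def IsQuadraticRefinement {V : Type*} [AddCommGroup V] [Module (ZMod 2) V]
    (B : V → V → ZMod 2) (q : V → ZMod 2) : Prop :=
  ∀ x y, q (x + y) = q x + q y + B x y

/-- `e` is a symplectic basis `(a_i, b_i)` for the form `B` (indices: `inl i ↦ a_i`,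
`inr i ↦ b_i`). -/
def IsSymplecticBasis {V : Type*} [AddCommGroup V] [Module (ZMod 2) V]
    (B : V → V → ZMod 2) {g : ℕ} (e : Module.Basis (Fin g ⊕ Fin g) (ZMod 2) V) : Prop :=
  (∀ i j, B (e (.inl i)) (e (.inr j)) = if i = j then 1 else 0) ∧
  (∀ i j, B (e (.inr i)) (e (.inl j)) = if i = j then 1 else 0) ∧
  (∀ i j, B (e (.inl i)) (e (.inl j)) = 0) ∧
  (∀ i j, B (e (.inr i)) (e (.inr j)) = 0)

/-- The Arf sum `Σ q(a_i) q(b_i)` of a quadratic refinement with respect to a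
symplectic basis. -/
noncomputable def arfSum {V : Type*} [AddCommGroup V] [Module (ZMod 2) V] {g : ℕ}
    (e : Module.Basis (Fin g ⊕ Fin g) (ZMod 2) V) (q : V → ZMod 2) : ZMod 2 :=
  ∑ i : Fin g, q (e (.inl i)) * q (e (.inr i))

/-!
The Arf invariant is read off a Gauss sum: `Σ_{v ∈ V} (-1)^{q v} = 2^g (-1)^{Arf(q)}`, and the
left-hand side does not mention the basis. To compute it, write `v = Σ_i (u_i a_i + w_i b_i)`.
The hyperbolic planes `⟨a_i, b_i⟩` are pairwise orthogonal, so
`q v = Σ_i (u_i q(a_i) + w_i q(b_i) + u_i w_i)` and the Gauss sum factors into `g` sums over a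
single plane, each of which equals `2 (-1)^{q(a_i) q(b_i)}`.
-/

namespace ZMod

def sign (x : ZMod 2) : ℤ := if x = 0 then 1 else -1

lemma sign_add : ∀ x y : ZMod 2, sign (x + y) = sign x * sign y := by decide

lemma sign_injective : Function.Injective sign := by decide

lemma sign_sum {ι : Type*} (s : Finset ι) (f : ι → ZMod 2) :
    sign (∑ i ∈ s, f i) = ∏ i ∈ s, sign (f i) := by
  induction s using Finset.cons_induction with
  | empty => rfl
  | cons a s ha ih => rw [Finset.sum_cons, Finset.prod_cons, sign_add, ih]

lemma sum_sign_hyperbolic : ∀ α β : ZMod 2,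
    ∑ p : ZMod 2 × ZMod 2, sign (p.1 * α + p.2 * β + p.1 * p.2) = 2 * sign (α * β) := by
  decide

end ZMod

lemma Module.Basis.sum_eq_sum_coords_sum_type {R V M ι : Type*} [Semiring R] [Fintype R]
    [AddCommMonoid V] [Module R V] [Fintype V] [AddCommMonoid M] [Fintype ι] [DecidableEq ι]
    (e : Module.Basis (ι ⊕ ι) R V) (f : V → M) :
    ∑ v, f v = ∑ c : ι → R × R, f (∑ i, ((c i).1 • e (.inl i) + (c i).2 • e (.inr i))) := by
  let coords : (ι → R × R) ≃ V :=
    ((Equiv.arrowProdEquivProdArrow _ _ _).trans (Equiv.sumArrowEquivProdArrow _ _ _).symm).trans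
      e.equivFun.symm.toEquiv
  refine (Fintype.sum_equiv coords _ _ fun c => congrArg f ?_).symm
  simp [coords, Module.Basis.equivFun_symm_apply, Fintype.sum_sum_type, Finset.sum_add_distrib]

namespace IsQuadraticRefinement

variable {V : Type*} [AddCommGroup V] [Module (ZMod 2) V]
  {B : V →ₗ[ZMod 2] V →ₗ[ZMod 2] ZMod 2} {q : V → ZMod 2}

lemma map_zero (hq : IsQuadraticRefinement (fun x y => B x y) q) : q 0 = 0 := by
  have h := hq 0 0
  simp only [add_zero, _root_.map_zero] at h
  rwa [CharTwo.add_self_eq_zero] at h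

lemma map_smul (hq : IsQuadraticRefinement (fun x y => B x y) q) (u : ZMod 2) (x : V) :
    q (u • x) = u * q x := by
  obtain rfl | rfl : u = 0 ∨ u = 1 := by decide +revert
  · simp [hq.map_zero]
  · simp

lemma map_smul_add_smul (hq : IsQuadraticRefinement (fun x y => B x y) q)
    (u w : ZMod 2) (x y : V) :
    q (u • x + w • y) = u * q x + w * q y + u * w * B x y := by
  rw [hq, hq.map_smul, hq.map_smul]
  dsimp only
  rw [LinearMap.map_smul₂, LinearMap.map_smul, smul_eq_mul,
    smul_eq_mul]
  ring

lemma map_sum_of_pairwise_orthogonal (hq : IsQuadraticRefinement (fun x y => B x y) q)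
    {ι : Type*} (s : Finset ι) (v : ι → V)
    (horth : ∀ i ∈ s, ∀ j ∈ s, i ≠ j → B (v i) (v j) = 0) :
    q (∑ i ∈ s, v i) = ∑ i ∈ s, q (v i) := by
  induction s using Finset.cons_induction with
  | empty => simpa using hq.map_zero
  | cons a s ha ih =>
    have hB : B (v a) (∑ i ∈ s, v i) = 0 := by
      rw [_root_.map_sum]
      exact Finset.sum_eq_zero fun j hj =>
        horth a (s.mem_cons_self a) j (Finset.mem_cons_of_mem hj) fun h => ha (h ▸ hj)
    rw [Finset.sum_cons, Finset.sum_cons, hq]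
    dsimp only
    rw [hB, add_zero, ih fun i hi j hj =>
      horth i (Finset.mem_cons_of_mem hi) j (Finset.mem_cons_of_mem hj)]

end IsQuadraticRefinement

namespace IsSymplecticBasis

variable {V : Type*} [AddCommGroup V] [Module (ZMod 2) V]
  {B : V →ₗ[ZMod 2] V →ₗ[ZMod 2] ZMod 2} {g : ℕ} {e : Module.Basis (Fin g ⊕ Fin g) (ZMod 2) V}

lemma apply_inl_inr_self (he : IsSymplecticBasis (fun x y => B x y) e) (i : Fin g) :
    B (e (.inl i)) (e (.inr i)) = 1 := by
  simpa using he.1 i i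

lemma hyperbolic_planes_orthogonal (he : IsSymplecticBasis (fun x y => B x y) e)
    {i j : Fin g} (hij : i ≠ j) (u w u' w' : ZMod 2) :
    B (u • e (.inl i) + w • e (.inr i)) (u' • e (.inl j) + w' • e (.inr j)) = 0 := by
  obtain ⟨hab, hba, haa, hbb⟩ := he
  simp [hab i j, hba i j, haa i j, hbb i j, hij]

lemma quadratic_refinement_apply_sum (he : IsSymplecticBasis (fun x y => B x y) e)
    {q : V → ZMod 2} (hq : IsQuadraticRefinement (fun x y => B x y) q)
    (c : Fin g → ZMod 2 × ZMod 2) :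
    q (∑ i, ((c i).1 • e (.inl i) + (c i).2 • e (.inr i))) =
      ∑ i, ((c i).1 * q (e (.inl i)) + (c i).2 * q (e (.inr i)) + (c i).1 * (c i).2) := by
  rw [hq.map_sum_of_pairwise_orthogonal _ _ fun i _ j _ hij =>
    he.hyperbolic_planes_orthogonal hij _ _ _ _]
  refine Finset.sum_congr rfl fun i _ => ?_
  rw [hq.map_smul_add_smul, he.apply_inl_inr_self, mul_one]

theorem sum_sign_eq [Fintype V] (he : IsSymplecticBasis (fun x y => B x y) e)
    {q : V → ZMod 2} (hq : IsQuadraticRefinement (fun x y => B x y) q) :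
    ∑ v : V, ZMod.sign (q v) = 2 ^ g * ZMod.sign (arfSum e q) := by
  classical
  calc ∑ v : V, ZMod.sign (q v)
      = ∑ c : Fin g → ZMod 2 × ZMod 2, ∏ i, ZMod.sign
          ((c i).1 * q (e (.inl i)) + (c i).2 * q (e (.inr i)) + (c i).1 * (c i).2) := by
        rw [e.sum_eq_sum_coords_sum_type]
        simp only [he.quadratic_refinement_apply_sum hq, ZMod.sign_sum]
    _ = ∏ i, ∑ p : ZMod 2 × ZMod 2, ZMod.sign
          (p.1 * q (e (.inl i)) + p.2 * q (e (.inr i)) + p.1 * p.2) :=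
        (Fintype.prod_sum fun i (p : ZMod 2 × ZMod 2) => ZMod.sign
          (p.1 * q (e (.inl i)) + p.2 * q (e (.inr i)) + p.1 * p.2)).symm
    _ = ∏ i, 2 * ZMod.sign (q (e (.inl i)) * q (e (.inr i))) := by
        simp only [ZMod.sum_sign_hyperbolic]
    _ = 2 ^ g * ZMod.sign (arfSum e q) := by
        rw [Finset.prod_mul_distrib, Finset.prod_const, Finset.card_univ, Fintype.card_fin,
          arfSum, ZMod.sign_sum]

end IsSymplecticBasis

/-- The Arf invariant `Σ q(a_i) q(b_i)` of a quadratic refinement of a nondegenerate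
symplectic bilinear form over `ZMod 2` does not depend on the choice of symplectic basis. -/
theorem arf_independent_of_symplectic_basis
    {V : Type*} [AddCommGroup V] [Module (ZMod 2) V]
    (B : V →ₗ[ZMod 2] V →ₗ[ZMod 2] ZMod 2) (q : V → ZMod 2)
    (hq : IsQuadraticRefinement (fun x y => B x y) q)
    {g g' : ℕ} (e : Module.Basis (Fin g ⊕ Fin g) (ZMod 2) V)
    (e' : Module.Basis (Fin g' ⊕ Fin g') (ZMod 2) V)
    (he : IsSymplecticBasis (fun x y => B x y) e)
    (he' : IsSymplecticBasis (fun x y => B x y) e') :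
    arfSum e q = arfSum e' q := by
  obtain rfl : g = g' := by
    have h := (Module.finrank_eq_card_basis e).symm.trans (Module.finrank_eq_card_basis e')
    simp only [Fintype.card_sum, Fintype.card_fin] at h
    omega
  let := Module.fintypeOfFintype e
  have h := (he.sum_sign_eq hq).symm.trans (he'.sum_sign_eq hq)
  exact ZMod.sign_injective (mul_left_cancel₀ (by positivity) h)
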